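/- arXiv:2406.03168 — 5 statements merged into one kernel-verified Lean document; each statement's English description precedes it below -/
import Mathlib

section
/- Let n be a positive integer and let a_1 < a_2 < ... < a_k be integers with (n+1)/4 ≤ a_1 and a_k < (n+1)/2. Then the circulant graph C(n; {a_1, a_2, ..., a_k}) is semi-transitive. -/
/-- The circulant graph `C(n; S)`: vertex set `ZMod n`, with distinct `i`, `j` adjacent iff
`(i - j) mod n` or `(j - i) mod n` lies in `S`. -/
def circGraph (n : ℕ) (S : Set ℕ) : SimpleGraph (ZMod n) :=
  SimpleGraph.fromRel (fun i j => ∃ a ∈ S, i - j = (a : ZMod n))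

/-- An orientation of a simple graph `G`: every edge gets exactly one direction. -/
structure GraphOrientation {V : Type*} (G : SimpleGraph V) where
  dir : V → V → Prop
  adj_of_dir : ∀ {u v : V}, dir u v → G.Adj u v
  dir_total : ∀ {u v : V}, G.Adj u v → dir u v ∨ dir v u
  dir_asymm : ∀ {u v : V}, dir u v → ¬ dir v u

/-- An orientation is acyclic if it has no directed cycle. -/
def GraphOrientation.IsAcyclic {V : Type*} {G : SimpleGraph V} (o : GraphOrientation G) : Prop :=
  ∀ v : V, ¬ Relation.TransGen o.dir v v

/-- An orientation is semi-transitive if it is acyclic and, for every directed path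
`p 0 → p 1 → ⋯ → p m` with `m ≥ 2`, either `p 0` and `p m` are non-adjacent or there is
an arc `p i → p j` for all `i < j ≤ m`. -/
def GraphOrientation.IsSemiTransitive {V : Type*} {G : SimpleGraph V} (o : GraphOrientation G) : Prop :=
  o.IsAcyclic ∧
    ∀ (m : ℕ) (p : ℕ → V), 2 ≤ m → (∀ i, i < m → o.dir (p i) (p (i + 1))) →
      (¬ G.Adj (p 0) (p m) ∨ ∀ i j : ℕ, i < j → j ≤ m → o.dir (p i) (p j))

/-- A graph is semi-transitive if it admits a semi-transitive orientation. -/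
def SimpleGraph.SemiTransitive {V : Type*} (G : SimpleGraph V) : Prop :=
  ∃ o : GraphOrientation G, o.IsSemiTransitive

/-- `C(n; {a_1, ..., a_k})` is semi-transitive whenever `(n+1)/4 ≤ a_1` (and
`a_k < (n+1)/2`). -/
theorem circulant_semiTransitive_of_large_min (n k : ℕ) (hn : 0 < n) (hk : 0 < k)
    (a : Fin k → ℕ) (ha : StrictMono a) (hpos : ∀ i, 0 < a i)
    (h1 : ((n : ℚ) + 1) / 4 ≤ ((a ⟨0, hk⟩ : ℕ) : ℚ))
    (h2 : ((a ⟨k - 1, Nat.sub_lt hk one_pos⟩ : ℕ) : ℚ) < ((n : ℚ) + 1) / 2) :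
    (circGraph n (Set.range a)).SemiTransitive := by
  haveI : NeZero n := ⟨hn.ne'⟩
  set A1 := a ⟨0, hk⟩ with hA1
  set Ak := a ⟨k - 1, Nat.sub_lt hk one_pos⟩ with hAk
  have h4 : n + 1 ≤ 4 * A1 := by
    have h : ((n : ℚ) + 1) ≤ 4 * (A1 : ℚ) := by linarith
    exact_mod_cast h
  have h2' : 2 * Ak ≤ n := by
    have h : 2 * (Ak : ℚ) < (n : ℚ) + 1 := by linarith
    have h' : 2 * Ak < n + 1 := by exact_mod_cast h
    omega
  have hA1pos : 0 < A1 := hpos _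
  have hbounds : ∀ i : Fin k, A1 ≤ a i ∧ a i ≤ Ak := by
    intro i
    refine ⟨ha.monotone (by rw [Fin.le_def]; exact Nat.zero_le _),
      ha.monotone (by rw [Fin.le_def]; have := i.isLt; exact Nat.le_sub_one_of_lt this)⟩
  set G := circGraph n (Set.range a) with hG
  have keyd : ∀ u v : ZMod n, G.Adj u v → u.val < v.val →
      A1 ≤ v.val - u.val ∧ v.val - u.val ≤ n - A1 := by
    intro u v hadj hlt
    have hvlt : v.val < n := ZMod.val_lt v
    have hu : ((u.val : ℕ) : ZMod n) = u := ZMod.natCast_rightInverse u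
    have hv : ((v.val : ℕ) : ZMod n) = v := ZMod.natCast_rightInverse v
    have hdiff : v - u = ((v.val - u.val : ℕ) : ZMod n) := by
      rw [Nat.cast_sub hlt.le, hu, hv]
    rw [hG, circGraph, SimpleGraph.fromRel_adj] at hadj
    obtain ⟨hne, hrel⟩ := hadj
    have key : ∃ i : Fin k, v.val - u.val = a i ∨ v.val - u.val = n - a i := by
      rcases hrel with h | h
      · -- u - v = a i : so v.val - u.val = n - a i
        obtain ⟨x, ⟨i, rfl⟩, h⟩ := h
        refine ⟨i, Or.inr ?_⟩
        have hsum0 : (((a i) + (v.val - u.val) : ℕ) : ZMod n) = 0 := by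
          push_cast
          rw [← hdiff, ← h]
          ring
        have hdvd : n ∣ (a i + (v.val - u.val)) :=
          (ZMod.natCast_eq_zero_iff _ _).mp hsum0
        have hain : a i < n := by have := hbounds i; omega
        obtain ⟨c, hc⟩ := hdvd
        have hdpos : 0 < v.val - u.val := by omega
        rcases Nat.lt_or_ge c 2 with hc2 | hc2
        · interval_cases c <;> omega
        · have h2n : n * 2 ≤ n * c := Nat.mul_le_mul_left n hc2
          omega
      · -- v - u = a i : so v.val - u.val = a i
        obtain ⟨x, ⟨i, rfl⟩, h⟩ := h
        refine ⟨i, Or.inl ?_⟩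
        have hain : a i < n := by have := hbounds i; omega
        have h1' : ((v.val - u.val : ℕ) : ZMod n) = ((a i : ℕ) : ZMod n) := by
          rw [← hdiff, h]
        have e1 := ZMod.val_cast_of_lt (show v.val - u.val < n by omega)
        have e2 := ZMod.val_cast_of_lt hain
        rw [h1'] at e1
        omega
    obtain ⟨i, hcase⟩ := key
    obtain ⟨hb1, hb2⟩ := hbounds i
    rcases hcase with h | h <;> omega
  let r : ZMod n → ZMod n → Prop := fun u v => G.Adj u v ∧ u.val < v.val
  have rmono : ∀ {u w : ZMod n}, Relation.TransGen r u w → u.val < w.val := by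
    intro u w h
    induction h with
    | single h => exact h.2
    | tail _ h ih => exact ih.trans h.2
  refine ⟨⟨r, fun h => h.1, ?_, fun h h' => lt_asymm h.2 h'.2⟩,
    fun v hv => lt_irrefl _ (rmono hv), ?_⟩
  · -- dir_total
    intro u v h
    have hne : u.val ≠ v.val := by
      intro he
      apply h.ne
      have := congrArg (Nat.cast : ℕ → ZMod n) he
      rwa [ZMod.natCast_rightInverse u, ZMod.natCast_rightInverse v] at this
    rcases Nat.lt_or_ge u.val v.val with hl | hl
    · exact Or.inl ⟨h, hl⟩
    · exact Or.inr ⟨h.symm, lt_of_le_of_ne hl (Ne.symm hne)⟩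
  · -- semi-transitivity condition
    intro m p hm hpath
    have hstep : ∀ i, i < m → (p i).val < (p (i + 1)).val := fun i hi => (hpath i hi).2
    have hsum : ∀ j, j ≤ m → (p 0).val + j * A1 ≤ (p j).val := by
      intro j
      induction j with
      | zero => simp
      | succ j ih =>
        intro hj
        have h1' := ih (by omega)
        have hd := keyd _ _ (hpath j (by omega)).1 (hstep j (by omega))
        have hlt := hstep j (by omega)
        have hstep' : (p j).val + A1 ≤ (p (j + 1)).val := by omega
        have : (j + 1) * A1 = j * A1 + A1 := by ring
        omega
    have hvm : (p m).val < n := ZMod.val_lt _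
    have hm3 : m ≤ 3 := by
      by_contra hc
      push_neg at hc
      have h1' := hsum m le_rfl
      have h2'' : 4 * A1 ≤ m * A1 := Nat.mul_le_mul_right _ (by omega)
      omega
    interval_cases m
    · -- m = 2
      by_cases hadj : G.Adj (p 0) (p 2)
      · right
        have h02 : (p 0).val < (p 2).val := (hstep 0 (by omega)).trans (hstep 1 (by omega))
        intro i j hij hj
        have : (i = 0 ∧ j = 1) ∨ (i = 0 ∧ j = 2) ∨ (i = 1 ∧ j = 2) := by omega
        rcases this with ⟨hi, hj'⟩ | ⟨hi, hj'⟩ | ⟨hi, hj'⟩ <;> subst hi <;> subst hj'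
        · exact hpath 0 (by omega)
        · exact ⟨hadj, h02⟩
        · exact hpath 1 (by omega)
      · exact Or.inl hadj
    · -- m = 3
      left
      intro hadj
      have h3 := hsum 3 le_rfl
      have h03 : (p 0).val < (p 3).val := by omega
      have hd := keyd _ _ hadj h03
      omega
end

section
/- Let n be a positive integer and let a_1 < a_2 < ... < a_k be integers with (n+1)/4 ≤ a_1 and a_k < (n+1)/2. Then the orientation of the circulant graph C(n; {a_1, a_2, ..., a_k}) which directs every edge {i, j} with i < j (as integers in {0, 1, ..., n-1}) from i to j is a semi-transitive orientation. -/
section Aux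

variable {n : ℕ} [NeZero n]

/-- If `u.val ≤ v.val` and `v - u = w` with `0 < w < n`, then `v.val - u.val = w`. -/
lemma zmod_diff_val {u v : ZMod n} (h : u.val ≤ v.val) {w : ℕ} (hw0 : 0 < w) (hwn : w < n)
    (heq : v - u = (w : ZMod n)) : v.val - u.val = w := by
  have := ZMod.val_sub h
  rw [heq] at this
  rw [ZMod.val_natCast, Nat.mod_eq_of_lt hwn] at this
  omega

end Aux

/-- When `(n+1)/4 ≤ a_1` and `a_k < (n+1)/2`, orienting every edge `{i, j}` of
`C(n; {a_1, ..., a_k})` from the smaller to the larger representative in `{0, ..., n-1}`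
is a semi-transitive orientation. -/
theorem circulant_natural_orientation_semiTransitive (n k : ℕ) (hn : 0 < n) (hk : 0 < k)
    (a : Fin k → ℕ) (ha : StrictMono a) (hpos : ∀ i, 0 < a i)
    (h1 : ((n : ℚ) + 1) / 4 ≤ ((a ⟨0, hk⟩ : ℕ) : ℚ))
    (h2 : ((a ⟨k - 1, Nat.sub_lt hk one_pos⟩ : ℕ) : ℚ) < ((n : ℚ) + 1) / 2) :
    ∃ o : GraphOrientation (circGraph n (Set.range a)),
      (∀ i j : ZMod n, o.dir i j ↔ ((circGraph n (Set.range a)).Adj i j ∧ i.val < j.val)) ∧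
      o.IsSemiTransitive := by
  haveI : NeZero n := ⟨hn.ne'⟩
  set G := circGraph n (Set.range a) with hG
  -- numeric bounds on elements of the range
  have hb1 : n + 1 ≤ 4 * a ⟨0, hk⟩ := by
    rw [div_le_iff₀ (by norm_num)] at h1
    exact_mod_cast (by linarith : ((n : ℚ) + 1) ≤ 4 * ((a ⟨0, hk⟩ : ℕ) : ℚ))
  have hb2 : 2 * a ⟨k - 1, Nat.sub_lt hk one_pos⟩ ≤ n := by
    rw [lt_div_iff₀ (by norm_num)] at h2
    have : ((2 * a ⟨k - 1, Nat.sub_lt hk one_pos⟩ : ℕ) : ℚ) < (n : ℚ) + 1 := by push_cast; linarith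
    have := (Nat.cast_lt (α := ℚ)).1 (by exact_mod_cast this : ((2 * a ⟨k - 1, Nat.sub_lt hk one_pos⟩ : ℕ) : ℚ) < ((n + 1 : ℕ) : ℚ))
    omega
  have hlo : ∀ i : Fin k, n + 1 ≤ 4 * a i := fun i => by
    have : a ⟨0, hk⟩ ≤ a i := ha.monotone (Fin.le_def.2 (Nat.zero_le _))
    omega
  have hhi : ∀ i : Fin k, 2 * a i ≤ n := fun i => by
    have : a i ≤ a ⟨k - 1, Nat.sub_lt hk one_pos⟩ := ha.monotone (Fin.le_def.2 (by have := i.2; simp; omega))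
    omega
  -- main bound: on any edge with u.val < v.val, the gap d satisfies n < 4d and 4d < 3n
  have hadj : ∀ u v : ZMod n, G.Adj u v → u.val < v.val →
      n < 4 * (v.val - u.val) ∧ 4 * (v.val - u.val) < 3 * n := by
    intro u v huv hlt
    rw [hG, circGraph, SimpleGraph.fromRel_adj] at huv
    obtain ⟨hne, h | h⟩ := huv
    · -- u - v = w, so v - u = n - w
      obtain ⟨w, ⟨i, rfl⟩, hw⟩ := h
      have hw0 : 0 < a i := hpos i
      have hwn : a i < n := by have := hhi i; omega
      have heq : v - u = ((n - a i : ℕ) : ZMod n) := by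
        push_cast [Nat.cast_sub hwn.le]
        rw [ZMod.natCast_self]
        linear_combination -hw
      have := zmod_diff_val hlt.le (by omega) (by omega) heq
      have h4 := hlo i
      have h2' := hhi i
      omega
    · obtain ⟨w, ⟨i, rfl⟩, hw⟩ := h
      have hw0 : 0 < a i := hpos i
      have hwn : a i < n := by have := hhi i; omega
      have := zmod_diff_val hlt.le hw0 hwn hw
      have h4 := hlo i
      have h2' := hhi i
      omega
  refine ⟨⟨fun u v => G.Adj u v ∧ u.val < v.val, fun h => h.1, ?_, ?_⟩, fun i j => Iff.rfl, ?_, ?_⟩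
  · intro u v h
    rcases lt_trichotomy u.val v.val with h' | h' | h'
    · exact Or.inl ⟨h, h'⟩
    · exact absurd (ZMod.val_injective n h') h.ne
    · exact Or.inr ⟨h.symm, h'⟩
  · rintro u v ⟨_, h⟩ ⟨_, h'⟩; omega
  · -- acyclic
    intro v hv
    have key : ∀ x y : ZMod n, Relation.TransGen
        (fun u v : ZMod n => G.Adj u v ∧ u.val < v.val) x y → x.val < y.val := by
      intro x y h
      induction h with
      | single h => exact h.2
      | tail _ h ih => exact ih.trans h.2
    exact absurd (key v v hv) (lt_irrefl _)
  · -- semi-transitive path condition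
    intro m p hm hp
    -- values increase along the path, with quantified gap
    have hmono : ∀ i j : ℕ, i < j → j ≤ m → (p i).val < (p j).val ∧
        (j - i) * n < 4 * ((p j).val - (p i).val) := by
      intro i j hij hjm
      induction j with
      | zero => omega
      | succ j ih =>
        have harc := hp j (by omega)
        have hstep := hadj _ _ harc.1 harc.2
        rcases Nat.lt_or_ge i j with h' | h'
        · have := ih (by omega) (by omega)
          constructor
          · exact this.1.trans harc.2
          · have : (j - i) * n < 4 * ((p j).val - (p i).val) := this.2
            have hle := harc.2
            have : (j + 1 - i) * n = (j - i) * n + n := by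
              rw [Nat.succ_sub (by omega), Nat.succ_mul]
            omega
        · have : i = j := by omega
          subst this
          simpa using ⟨harc.2, by omega⟩
    -- m ≤ 3
    have hm3 : m ≤ 3 := by
      by_contra h
      have h0 := hmono 0 m (by omega) le_rfl
      rw [Nat.sub_zero] at h0
      have hv := ZMod.val_lt (p m)
      have : 4 * n ≤ m * n := Nat.mul_le_mul_right n (by omega)
      omega
    interval_cases m
    · -- m = 2
      by_cases hA : G.Adj (p 0) (p 2)
      · right
        intro i j hij hj2
        interval_cases j
        · omega
        · interval_cases i
          exact hp 0 (by omega)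
        · interval_cases i
          · exact ⟨hA, (hmono 0 2 (by omega) le_rfl).1⟩
          · exact hp 1 (by omega)
      · exact Or.inl hA
    · -- m = 3 : endpoints can't be adjacent
      left
      intro hA
      have hlt := (hmono 0 3 (by omega) le_rfl)
      rw [Nat.sub_zero] at hlt
      have := (hadj _ _ hA hlt.1).2
      have := hlt.2
      omega
end

section
/- For every positive integer n and every t with 1 ≤ t ≤ ⌊n/2⌋, the circulant graph C(n; {t, t+1, ..., ⌊n/2⌋}) is semi-transitive. Moreover, the orientation directing every edge {i, j} with i < j (as integers in {0, 1, ..., n-1}) from i to j is a semi-transitive orientation of this graph. -/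
/-!
Orient every edge from the smaller to the larger representative in `{0, …, n-1}`. Two such
representatives `x < y` are adjacent exactly when `x + t ≤ y ≤ x + (n - t)`. Along a directed path
the representatives increase by at least `t` per step, so any two of its vertices are at least `t`
apart; if moreover the endpoints are adjacent, any two vertices are at most `n - t` apart, since
they lie between the endpoints. Hence all of them are adjacent, with arcs going forward.
-/

namespace GraphOrientation

def ofRank {V : Type*} (G : SimpleGraph V) (f : V → ℕ) (hf : Function.Injective f) :
    GraphOrientation G where
  dir u v := G.Adj u v ∧ f u < f v
  adj_of_dir h := h.1
  dir_total h := (lt_or_gt_of_ne (hf.ne h.ne)).imp (⟨h, ·⟩) (⟨h.symm, ·⟩)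
  dir_asymm h h' := h.2.not_gt h'.2

variable {V : Type*} {G : SimpleGraph V} {f : V → ℕ}

theorem isAcyclic_ofRank (hf : Function.Injective f) : (ofRank G f hf).IsAcyclic := by
  intro v hv
  have hlt : Relation.TransGen (· < ·) (f v) (f v) := hv.lift f fun _ _ h => h.2
  rw [Relation.transGen_eq_self] at hlt
  exact hlt.false

theorem isSemiTransitive_ofRank (hf : Function.Injective f) {a b : ℕ}
    (hadj : ∀ u v, f u < f v → (G.Adj u v ↔ f u + a ≤ f v ∧ f v ≤ f u + b)) :
    (ofRank G f hf).IsSemiTransitive := by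
  refine ⟨isAcyclic_ofRank hf, fun m p _ hp => or_iff_not_imp_left.2 fun hend i j hij hjm => ?_⟩
  rw [not_not] at hend
  have hmono : StrictMonoOn (f ∘ p) (Set.Iic m) :=
    strictMonoOn_of_lt_add_one Set.ordConnected_Iic fun k _ _ hk => (hp k hk).2
  have hle : ∀ k l, k ≤ l → l ≤ m → f (p k) ≤ f (p l) := fun _ _ hkl hlm =>
    hmono.monotoneOn (hkl.trans hlm) hlm hkl
  have hij' : f (p i) < f (p j) := hmono (hij.le.trans hjm) hjm hij
  have hstep : f (p i) + a ≤ f (p (i + 1)) :=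
    ((hadj _ _ (hp i (by omega)).2).1 (hp i (by omega)).1).1
  have hnext := hle (i + 1) j hij hjm
  have hfirst := hle 0 i (Nat.zero_le i) (by omega)
  have hlast := hle j m hjm le_rfl
  have hspan : f (p m) ≤ f (p 0) + b := ((hadj _ _ (by omega)).1 hend).2
  exact ⟨(hadj _ _ hij').2 ⟨by omega, by omega⟩, hij'⟩

end GraphOrientation

section circGraph

variable {n : ℕ} [NeZero n]

theorem ZMod.exists_mem_eq_natCast_iff {S : Set ℕ} (hS : ∀ a ∈ S, a < n) (x : ZMod n) :
    (∃ a ∈ S, x = a) ↔ x.val ∈ S := by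
  constructor
  · rintro ⟨a, ha, rfl⟩
    rwa [ZMod.val_natCast_of_lt (hS a ha)]
  · exact fun hx => ⟨x.val, hx, (ZMod.natCast_zmod_val x).symm⟩

theorem circGraph_adj_iff_val {S : Set ℕ} (hS : ∀ a ∈ S, a < n) {i j : ZMod n} :
    (circGraph n S).Adj i j ↔ i ≠ j ∧ ((i - j).val ∈ S ∨ (j - i).val ∈ S) := by
  simp only [circGraph, SimpleGraph.fromRel_adj, ZMod.exists_mem_eq_natCast_iff hS]

theorem circGraph_Icc_half_adj_iff (t : ℕ) {i j : ZMod n} (hij : i.val < j.val) :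
    (circGraph n (Set.Icc t (n / 2))).Adj i j ↔ i.val + t ≤ j.val ∧ j.val ≤ i.val + (n - t) := by
  have hne : i ≠ j := fun h => hij.ne (congrArg ZMod.val h)
  have : NeZero (j - i) := ⟨sub_ne_zero.2 hne.symm⟩
  have hforward : (j - i).val = j.val - i.val := ZMod.val_sub hij.le
  have hbackward : (i - j).val = n - (j.val - i.val) := by
    rw [← neg_sub, ZMod.val_neg_of_ne_zero, hforward]
  have hjn := j.val_lt
  rw [circGraph_adj_iff_val fun a ha => ha.2.trans_lt (Nat.div_lt_self (NeZero.pos n) one_lt_two),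
    hforward, hbackward, Set.mem_Icc, Set.mem_Icc, and_iff_right hne]
  omega

end circGraph

theorem circulant_up_to_half_semiTransitive_general (n t : ℕ) (hn : 0 < n) :
    (circGraph n (Set.Icc t (n / 2))).SemiTransitive ∧
    ∃ o : GraphOrientation (circGraph n (Set.Icc t (n / 2))),
      (∀ i j : ZMod n,
        o.dir i j ↔ ((circGraph n (Set.Icc t (n / 2))).Adj i j ∧ i.val < j.val)) ∧
      o.IsSemiTransitive := by
  have : NeZero n := ⟨hn.ne'⟩
  have h := GraphOrientation.isSemiTransitive_ofRank (ZMod.val_injective n)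
    fun _ _ => circGraph_Icc_half_adj_iff t
  exact ⟨⟨_, h⟩, _, fun _ _ => Iff.rfl, h⟩

/-- `C(n; {t, t+1, ..., ⌊n/2⌋})` is semi-transitive for every `1 ≤ t ≤ ⌊n/2⌋`; moreover the
orientation directing each edge `{i, j}` from the smaller to the larger representative in
`{0, ..., n-1}` is a semi-transitive orientation. -/
theorem circulant_up_to_half_semiTransitive (n t : ℕ) (hn : 0 < n)
    (ht1 : 1 ≤ t) (ht2 : t ≤ n / 2) :
    (circGraph n (Set.Icc t (n / 2))).SemiTransitive ∧
    ∃ o : GraphOrientation (circGraph n (Set.Icc t (n / 2))),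
      (∀ i j : ZMod n,
        o.dir i j ↔ ((circGraph n (Set.Icc t (n / 2))).Adj i j ∧ i.val < j.val)) ∧
      o.IsSemiTransitive :=
  circulant_up_to_half_semiTransitive_general n t hn
end

section
/- For positive integers n and k with k < (n+1)/2, the circulant graph C(n; {1, 2, ..., k}) is 2-word-representable; that is, there is a 2-uniform word over the alphabet {0, 1, ..., n-1} that represents C(n; {1, 2, ..., k}). -/
/-- Two distinct letters `x` and `y` alternate in the word `w` if the subword of `w` consisting
of all occurrences of `x` and `y` has no two equal consecutive letters. -/
def Alternate {V : Type*} [DecidableEq V] (w : List V) (x y : V) : Prop :=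
  (w.filter fun z => decide (z = x ∨ z = y)).Chain' (· ≠ ·)

/-- A word `w` represents the graph `G` if every vertex occurs in `w` and two distinct
vertices are adjacent iff they alternate in `w`. -/
def Represents {V : Type*} [DecidableEq V] (w : List V) (G : SimpleGraph V) : Prop :=
  (∀ v : V, v ∈ w) ∧ ∀ x y : V, x ≠ y → (G.Adj x y ↔ Alternate w x y)

/-- `w` is a `k`-uniform word (each letter occurring in `w` occurs exactly `k` times)
representing the graph `G`. -/
def KUniformRepresents {V : Type*} [DecidableEq V] (k : ℕ) (w : List V) (G : SimpleGraph V) :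
    Prop :=
  (∀ v ∈ w, w.count v = k) ∧ Represents w G

/-!
For `2k < n` the word `0 (-k) 1 (1-k) 2 (2-k) ⋯ (n-1) (n-1-k)` works. Every letter occurs twice,
and adding `x` to every letter only rotates the word; since alternation in a 2-uniform word is
invariant under rotation, `x` and `y` alternate iff `0` and `y - x` do. The two occurrences of `0`
enclose exactly the letters `±1, …, ±k`, each once, so `0` alternates precisely with these.
For `2k = n` the graph is complete and `(0 1 ⋯ n-1)(0 1 ⋯ n-1)` represents it.
-/

namespace List

variable {α β : Type*} {l l' : List α}

theorem IsRotated.filter (h : l ~r l') (p : α → Bool) : l.filter p ~r l'.filter p := by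
  obtain ⟨m, rfl⟩ := h
  conv_lhs => rw [← take_append_drop (m % l.length) l]
  rw [rotate_eq_drop_append_take_mod, filter_append, filter_append]
  exact isRotated_append

theorem IsRotated.flatMap (h : l ~r l') (f : α → List β) : l.flatMap f ~r l'.flatMap f := by
  obtain ⟨m, rfl⟩ := h
  conv_lhs => rw [← take_append_drop (m % l.length) l]
  rw [rotate_eq_drop_append_take_mod, flatMap_append, flatMap_append]
  exact isRotated_append

end List

section Alternation

variable {V : Type*} {x y : V}

theorem isChain_ne_iff_of_perm {u : List V} (hu : u.Perm [x, y, x, y]) (hxy : x ≠ y) :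
    u.IsChain (· ≠ ·) ↔ u = [x, y, x, y] ∨ u = [y, x, y, x] := by
  have hmem : ∀ z ∈ u, z = x ∨ z = y := fun z hz => by
    have := hu.subset hz
    simp only [List.mem_cons, List.not_mem_nil, or_false] at this
    tauto
  match u, hu.length_eq, hmem with
  | [a, b, c, d], _, hmem =>
    simp only [List.mem_cons, List.not_mem_nil, or_false, forall_eq_or_imp, forall_eq] at hmem
    obtain ⟨ha | ha, hb | hb, hc | hc, hd | hd⟩ := hmem <;> subst ha hb hc hd <;>
      simp [hxy, hxy.symm]

variable [DecidableEq V]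

theorem alternate_iff_isChain {w : List V} :
    Alternate w x y ↔ (w.filter fun z => decide (z = x ∨ z = y)).IsChain (· ≠ ·) :=
  Iff.rfl

theorem filter_perm_of_count_eq_two {w : List V} (hxy : x ≠ y) (hx : w.count x = 2)
    (hy : w.count y = 2) : (w.filter fun z => decide (z = x ∨ z = y)).Perm [x, y, x, y] := by
  rw [List.perm_iff_count]
  intro z
  by_cases hz : z = x ∨ z = y
  · rw [List.count_filter (by simpa using hz)]
    rcases hz with rfl | rfl <;> simp [hx, hy, hxy, hxy.symm]
  · rw [List.count_eq_zero.2 fun h => hz (by simpa using (List.mem_filter.1 h).2),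
      List.count_eq_zero.2 fun h => hz (by simp at h; tauto)]

theorem alternate_iff_of_isRotated {w w' : List V} (h : w.IsRotated w') (hxy : x ≠ y)
    (hx : w.count x = 2) (hy : w.count y = 2) : Alternate w x y ↔ Alternate w' x y := by
  have chain_of_rotated : ∀ u u' : List V, u.IsRotated u' → u.Perm [x, y, x, y] →
      u.IsChain (· ≠ ·) → u'.IsChain (· ≠ ·) := by
    intro u u' hr hu hc
    have hu' := hr.perm.symm.trans hu
    rw [isChain_ne_iff_of_perm hu hxy] at hc
    have hrot : u'.IsRotated [x, y, x, y] := by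
      rcases hc with rfl | rfl
      · exact hr.symm
      · exact hr.symm.trans ⟨1, rfl⟩
    have hcyc : [x, y, x, y].cyclicPermutations =
        [[x, y, x, y], [y, x, y, x], [x, y, x, y], [y, x, y, x]] := rfl
    rw [← List.mem_cyclicPermutations_iff, hcyc] at hrot
    rw [isChain_ne_iff_of_perm hu' hxy]
    simp only [List.mem_cons, List.not_mem_nil, or_false] at hrot
    tauto
  have hp := filter_perm_of_count_eq_two hxy hx hy
  have hr := h.filter fun z => decide (z = x ∨ z = y)
  exact ⟨chain_of_rotated _ _ hr hp, chain_of_rotated _ _ hr.symm (hr.perm.symm.trans hp)⟩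

theorem filter_eq_replicate_count_of_notMem {l : List V} (hx : x ∉ l) :
    (l.filter fun z => decide (z = x ∨ z = y)) = List.replicate (l.count y) y := by
  rw [← List.filter_eq]
  refine List.filter_congr fun z hz => ?_
  have : z ≠ x := fun h => hx (h ▸ hz)
  simp [this]

theorem alternate_append_cons_append_cons_iff {a b c : List V} (ha : x ∉ a) (hb : x ∉ b)
    (hc : x ∉ c) (hxy : x ≠ y) (hy : (a ++ b ++ c).count y = 2) :
    Alternate (a ++ x :: (b ++ x :: c)) x y ↔ b.count y = 1 := by
  simp only [List.count_append] at hy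
  rw [alternate_iff_isChain, List.filter_append, List.filter_cons_of_pos (by simp),
    List.filter_append, List.filter_cons_of_pos (by simp), filter_eq_replicate_count_of_notMem ha,
    filter_eq_replicate_count_of_notMem hb, filter_eq_replicate_count_of_notMem hc]
  generalize a.count y = p, b.count y = q, c.count y = r at hy ⊢
  obtain ⟨hp, hq, hr⟩ : p ≤ 2 ∧ q ≤ 2 ∧ r ≤ 2 := by omega
  interval_cases p <;> interval_cases q <;> interval_cases r <;>
    first | omega | simp [hxy, hxy.symm]

theorem alternate_append_self {L : List V} (hL : L.Nodup) (hx : x ∈ L) (hy : y ∈ L)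
    (hxy : x ≠ y) : Alternate (L ++ L) x y := by
  obtain ⟨a, c, rfl⟩ := List.append_of_mem hx
  have hxac : x ∉ a ++ c := (List.nodup_cons.1 (List.nodup_middle.1 hL)).1
  have hyac : (a ++ c).count y = 1 := by
    have := hL.count (a := y)
    rw [if_pos hy, List.count_append, List.count_cons_of_ne hxy] at this
    rwa [List.count_append]
  have hsplit : (a ++ x :: c) ++ (a ++ x :: c) = a ++ x :: ((c ++ a) ++ x :: c) := by simp
  rw [List.mem_append, not_or] at hxac
  rw [hsplit,
    alternate_append_cons_append_cons_iff hxac.1 (by simp [hxac.1, hxac.2]) hxac.2 hxy]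
  · simpa [List.count_append, add_comm] using hyac
  · simp only [List.count_append] at hyac ⊢
    omega

end Alternation

section Translation

variable {V W : Type*} [DecidableEq V] [DecidableEq W]

theorem alternate_map_iff {f : V → W} (hf : Function.Injective f) {w : List V} {x y : V} :
    Alternate (w.map f) (f x) (f y) ↔ Alternate w x y := by
  simp only [alternate_iff_isChain, List.filter_map, List.isChain_map, Function.comp_def,
    hf.eq_iff, hf.ne_iff]

variable {G : Type*} [AddGroup G] [DecidableEq G] {w : List G}

theorem count_eq_count_zero_of_forall_isRotated (hw : ∀ x : G, (w.map (· + x)).IsRotated w)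
    (v : G) : w.count v = w.count 0 := by
  calc w.count v = (w.map (· + v)).count (0 + v) := by rw [zero_add, (hw v).perm.count_eq]
    _ = w.count 0 := List.count_map_of_injective _ _ (add_left_injective v) _

theorem alternate_iff_alternate_zero_sub (hw : ∀ x : G, (w.map (· + x)).IsRotated w)
    (hc : ∀ v, w.count v = 2) {x y : G} (hxy : x ≠ y) :
    Alternate w x y ↔ Alternate w 0 (y - x) := by
  calc Alternate w x y ↔ Alternate (w.map (· + x)) x y :=
        alternate_iff_of_isRotated (hw x).symm hxy (hc x) (hc y)
    _ ↔ Alternate (w.map (· + x)) (0 + x) (y - x + x) := by rw [zero_add, sub_add_cancel]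
    _ ↔ Alternate w 0 (y - x) := alternate_map_iff (add_left_injective x)

end Translation

theorem kUniformRepresents_of_count_eq {V : Type*} [DecidableEq V] {m : ℕ} (hm : m ≠ 0)
    {w : List V} {G : SimpleGraph V} (hc : ∀ v, w.count v = m)
    (hadj : ∀ x y, x ≠ y → (G.Adj x y ↔ Alternate w x y)) : KUniformRepresents m w G :=
  ⟨fun v _ => hc v, fun v => List.count_pos_iff.1 (by rw [hc v]; exact Nat.pos_of_ne_zero hm),
    hadj⟩

section Residues

variable {n : ℕ}

def residues (n : ℕ) : List (ZMod n) := (List.range n).map Nat.cast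

theorem residues_map_add_one_isRotated (n : ℕ) :
    ((residues n).map (· + 1)).IsRotated (residues n) := by
  cases n with
  | zero => simp [residues]
  | succ m =>
    set T : List (ZMod (m + 1)) := (List.range m).map fun i => ((i + 1 : ℕ) : ZMod (m + 1))
    have hshift : (residues (m + 1)).map (· + 1) = T ++ [0] := by
      simp [T, residues, List.range_succ, Function.comp_def]
    have hcons : residues (m + 1) = 0 :: T := by
      simp [T, residues, List.range_succ_eq_map, Function.comp_def]
    rw [hshift, hcons]
    exact List.IsRotated.cons_append_singleton.symm

theorem residues_map_add_isRotated [NeZero n] (x : ZMod n) :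
    ((residues n).map (· + x)).IsRotated (residues n) := by
  rw [← ZMod.natCast_zmod_val x]
  induction x.val with
  | zero => simpa using List.IsRotated.refl _
  | succ m ih =>
    have : (residues n).map (· + ((m + 1 : ℕ) : ZMod n)) =
        ((residues n).map (· + (m : ZMod n))).map (· + 1) := by
      simp [List.map_map, Function.comp_def, add_assoc]
    rw [this]
    exact (ih.map _).trans (residues_map_add_one_isRotated n)

theorem ZMod.natCast_eq_iff_eq_val [NeZero n] {m : ℕ} (hm : m < n) (z : ZMod n) :
    (m : ZMod n) = z ↔ m = z.val := by
  constructor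
  · rintro rfl
    exact (ZMod.val_natCast_of_lt hm).symm
  · rintro rfl
    exact ZMod.natCast_zmod_val z

theorem nodup_residues [NeZero n] : (residues n).Nodup :=
  List.nodup_range.map_on fun i hi j hj hij => by
    rw [List.mem_range] at hi hj
    rwa [ZMod.natCast_eq_iff_eq_val hi, ZMod.val_natCast_of_lt hj] at hij

theorem mem_residues [NeZero n] (v : ZMod n) : v ∈ residues n :=
  List.mem_map.2 ⟨v.val, List.mem_range.2 (ZMod.val_lt v), ZMod.natCast_zmod_val v⟩

theorem count_residues [NeZero n] (v : ZMod n) : (residues n).count v = 1 := by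
  rw [nodup_residues.count, if_pos (mem_residues v)]

end Residues

section Circulant

variable {n k : ℕ}

theorem circGraph_adj_iff_adj_zero_sub (S : Set ℕ) (x y : ZMod n) :
    (circGraph n S).Adj x y ↔ (circGraph n S).Adj 0 (y - x) := by
  simp only [circGraph, SimpleGraph.fromRel_adj, zero_sub, neg_sub, sub_zero, ne_eq,
    eq_comm (a := (0 : ZMod n)), sub_eq_zero, eq_comm (a := y)]

theorem circGraph_Icc_adj_zero_iff [NeZero n] (z : ZMod n) :
    (circGraph n (Set.Icc 1 k)).Adj 0 z ↔ z ≠ 0 ∧ (z.val ≤ k ∨ n - k ≤ z.val) := by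
  simp only [circGraph, SimpleGraph.fromRel_adj, zero_sub, sub_zero, Set.mem_Icc, ne_comm]
  refine and_congr_right fun hz => ?_
  have hzv : z.val < n := ZMod.val_lt z
  have hneg : (-z).val = n - z.val := by
    have : NeZero z := ⟨hz⟩
    exact ZMod.val_neg_of_ne_zero z
  constructor
  · rintro (⟨a, ⟨-, ha⟩, hza⟩ | ⟨a, ⟨-, ha⟩, hza⟩)
    · have := congrArg ZMod.val hza
      rw [hneg, ZMod.val_natCast] at this
      have := Nat.mod_le a n
      omega
    · have := congrArg ZMod.val hza
      rw [ZMod.val_natCast] at this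
      have := Nat.mod_le a n
      omega
  · have hv : z.val ≠ 0 := (ZMod.val_eq_zero z).not.2 hz
    rintro (h | h)
    · exact Or.inr ⟨z.val, ⟨by omega, h⟩, (ZMod.natCast_zmod_val z).symm⟩
    · refine Or.inl ⟨n - z.val, ⟨by omega, by omega⟩, ?_⟩
      rw [Nat.cast_sub hzv.le, ZMod.natCast_self, ZMod.natCast_zmod_val, zero_sub]

theorem circGraph_Icc_adj_iff_of_le [NeZero n] (h : n ≤ 2 * k) (x y : ZMod n) :
    (circGraph n (Set.Icc 1 k)).Adj x y ↔ x ≠ y := by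
  rw [circGraph_adj_iff_adj_zero_sub, circGraph_Icc_adj_zero_iff, sub_ne_zero, ne_comm]
  exact and_iff_left (by omega)

def circWord (n k : ℕ) : List (ZMod n) := (residues n).flatMap fun v => [v, v - (k : ZMod n)]

theorem circWord_map_add_isRotated [NeZero n] (x : ZMod n) :
    ((circWord n k).map (· + x)).IsRotated (circWord n k) := by
  have : (circWord n k).map (· + x) =
      ((residues n).map (· + x)).flatMap fun v => [v, v - (k : ZMod n)] := by
    simp [circWord, List.map_flatMap, List.flatMap_map, sub_add_eq_add_sub]
  rw [this]
  exact (residues_map_add_isRotated x).flatMap _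

-- The letters strictly between the two occurrences of `0` in `circWord n k`; `i - k` is
-- represented by `n - k + i` so that distinctness becomes arithmetic in `ℕ`.
def circSegment (n k : ℕ) : List (ZMod n) :=
  ((List.range k).flatMap fun i => [n - k + i, i + 1]).map Nat.cast

theorem mem_circSegment [NeZero n] (hkn : k < n) (z : ZMod n) :
    z ∈ circSegment n k ↔ z ≠ 0 ∧ (z.val ≤ k ∨ n - k ≤ z.val) := by
  have hzv : z.val < n := ZMod.val_lt z
  rw [ne_eq, ← (ZMod.val_eq_zero z).not]
  simp only [circSegment, List.mem_map, List.mem_flatMap, List.mem_range, List.mem_cons,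
    List.not_mem_nil, or_false]
  constructor
  · rintro ⟨m, ⟨i, hi, hm⟩, rfl⟩
    rw [ZMod.val_natCast_of_lt (by omega)]
    omega
  · rintro ⟨hz, h⟩
    refine ⟨z.val, ?_, ZMod.natCast_zmod_val z⟩
    rcases h with h | h
    · exact ⟨z.val - 1, by omega, Or.inr (by omega)⟩
    · exact ⟨z.val - (n - k), by omega, Or.inl (by omega)⟩

theorem nodup_circSegment [NeZero n] (h : 2 * k < n) : (circSegment n k).Nodup := by
  refine List.Nodup.map_on (fun i hi j hj hij => ?_) (List.nodup_flatMap.2 ⟨?_, ?_⟩)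
  · simp only [List.mem_flatMap, List.mem_range, List.mem_cons, List.not_mem_nil,
      or_false] at hi hj
    rwa [ZMod.natCast_eq_iff_eq_val (by omega), ZMod.val_natCast_of_lt (by omega)] at hij
  · intro i hi
    simp only [List.mem_range] at hi
    simp only [List.nodup_cons, List.mem_singleton, List.not_mem_nil, not_false_eq_true,
      List.nodup_nil, and_true]
    omega
  · refine List.pairwise_lt_range.imp_of_mem fun {i j} _ hj hij => ?_
    simp only [List.mem_range] at hj
    show List.Disjoint [n - k + i, i + 1] [n - k + j, j + 1]
    simp only [List.disjoint_cons_left, List.mem_cons, List.not_mem_nil, or_false,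
      List.disjoint_nil_left, and_true]
    omega

theorem flatMap_range_succ_eq_cons (m : ℕ) :
    (List.range (m + 1)).flatMap (fun j : ℕ => [(j : ZMod n), (j : ZMod n) - k]) =
      0 :: ((List.range m).flatMap (fun i : ℕ => [(i : ZMod n) - k, (i : ZMod n) + 1]) ++
        [(m : ZMod n) - k]) := by
  induction m with
  | zero => simp
  | succ m ih =>
    rw [List.range_succ, List.flatMap_append, ih, List.range_succ, List.flatMap_append]
    simp

theorem circWord_eq_cons_circSegment [NeZero n] (hkn : k < n) :
    ∃ c, 0 ∉ c ∧ circWord n k = 0 :: (circSegment n k ++ 0 :: c) := by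
  set B : ℕ → List (ZMod n) := fun j => [(j : ZMod n), (j : ZMod n) - k]
  refine ⟨(List.map (k + 1 + ·) (List.range (n - (k + 1)))).flatMap B, ?_, ?_⟩
  · simp only [B, List.mem_flatMap, List.mem_map, List.mem_range, List.mem_cons,
      List.not_mem_nil, or_false, not_exists, not_and]
    rintro _ ⟨a, ha, rfl⟩ (h | h)
    · rw [eq_comm, ZMod.natCast_eq_iff_eq_val (by omega), ZMod.val_zero] at h
      omega
    · rw [eq_comm, ← Nat.cast_sub (by omega), ZMod.natCast_eq_iff_eq_val (by omega),
        ZMod.val_zero] at h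
      omega
  · have hseg : circSegment n k =
        (List.range k).flatMap (fun i : ℕ => [(i : ZMod n) - k, (i : ZMod n) + 1]) := by
      simp only [circSegment, List.map_flatMap, List.map_cons, List.map_nil]
      congr 1
      funext i
      rw [Nat.cast_add, Nat.cast_sub hkn.le, ZMod.natCast_self, Nat.cast_add, Nat.cast_one]
      ring_nf
    have hsplit : List.range n = List.range (k + 1) ++
        List.map (k + 1 + ·) (List.range (n - (k + 1))) := by
      rw [← List.range_add, Nat.add_sub_cancel' hkn]
    rw [circWord, residues, List.flatMap_map, hsplit, List.flatMap_append,
      flatMap_range_succ_eq_cons, hseg, sub_self]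
    simp [B]

theorem count_circWord [NeZero n] (hkn : k < n) (v : ZMod n) : (circWord n k).count v = 2 := by
  obtain ⟨c, hc, hw⟩ := circWord_eq_cons_circSegment hkn
  have hseg : (0 : ZMod n) ∉ circSegment n k := by simp [mem_circSegment hkn]
  rw [count_eq_count_zero_of_forall_isRotated circWord_map_add_isRotated, hw]
  simp [List.count_eq_zero.2 hseg, List.count_eq_zero.2 hc]

theorem alternate_circWord_iff [NeZero n] (h : 2 * k < n) {x y : ZMod n} (hxy : x ≠ y) :
    Alternate (circWord n k) x y ↔ (circGraph n (Set.Icc 1 k)).Adj x y := by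
  have hkn : k < n := by omega
  obtain ⟨c, hc, hw⟩ := circWord_eq_cons_circSegment hkn
  have hseg : (0 : ZMod n) ∉ circSegment n k := by simp [mem_circSegment hkn]
  have hyx : (0 : ZMod n) ≠ y - x := (sub_ne_zero.2 hxy.symm).symm
  have hcount := count_circWord hkn (y - x)
  rw [hw, List.count_cons_of_ne hyx, List.count_append, List.count_cons_of_ne hyx] at hcount
  rw [alternate_iff_alternate_zero_sub circWord_map_add_isRotated (count_circWord hkn) hxy,
    circGraph_adj_iff_adj_zero_sub, circGraph_Icc_adj_zero_iff, ← mem_circSegment hkn, hw,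
    ← List.nil_append (0 :: _),
    alternate_append_cons_append_cons_iff List.not_mem_nil hseg hc hyx (by simpa using hcount),
    (nodup_circSegment h).count]
  split_ifs with hmem <;> simp [hmem]

theorem kUniformRepresents_circWord [NeZero n] (h : 2 * k < n) :
    KUniformRepresents 2 (circWord n k) (circGraph n (Set.Icc 1 k)) :=
  kUniformRepresents_of_count_eq two_ne_zero (count_circWord (by omega))
    fun _ _ hxy => (alternate_circWord_iff h hxy).symm

theorem kUniformRepresents_residues_append_residues [NeZero n] (h : n ≤ 2 * k) :
    KUniformRepresents 2 (residues n ++ residues n) (circGraph n (Set.Icc 1 k)) := by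
  refine kUniformRepresents_of_count_eq two_ne_zero
    (fun v => by rw [List.count_append, count_residues]) fun x y hxy => ?_
  rw [circGraph_Icc_adj_iff_of_le h]
  exact iff_of_true hxy
    (alternate_append_self nodup_residues (mem_residues x) (mem_residues y) hxy)

end Circulant

theorem circulant_one_to_k_two_word_representable_general (n k : ℕ) (hn : 0 < n)
    (h : (k : ℚ) < ((n : ℚ) + 1) / 2) :
    ∃ w : List (ZMod n), KUniformRepresents 2 w (circGraph n (Set.Icc 1 k)) := by
  have : NeZero n := ⟨hn.ne'⟩
  have h2k : 2 * k ≤ n := by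
    have : ((2 * k : ℕ) : ℚ) < ((n + 1 : ℕ) : ℚ) := by push_cast; linarith
    exact Nat.lt_succ_iff.1 (by exact_mod_cast this)
  rcases h2k.lt_or_eq with hlt | heq
  · exact ⟨circWord n k, kUniformRepresents_circWord hlt⟩
  · exact ⟨residues n ++ residues n, kUniformRepresents_residues_append_residues heq.ge⟩

/-- `C(n; {1, 2, ..., k})` is 2-word-representable. -/
theorem circulant_one_to_k_two_word_representable (n k : ℕ) (hn : 0 < n) (hk : 0 < k)
    (h : (k : ℚ) < ((n : ℚ) + 1) / 2) :
    ∃ w : List (ZMod n), KUniformRepresents 2 w (circGraph n (Set.Icc 1 k)) :=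
  circulant_one_to_k_two_word_representable_general n k hn h
end

section
/- Let a and n be positive integers with a < n, a even, n odd, and gcd(a, n) = 1. Then the circulant graph C(2n; {a, n}) is isomorphic to the prism graph Pr_n, i.e., to the Cartesian product of the path on two vertices P_2 with the cycle C_n. -/
namespace SimpleGraph

variable {G H : Type*} [AddGroup G] [AddGroup H]

def circulantGraphCongr (e : G ≃+ H) (s : Set G) :
    circulantGraph s ≃g circulantGraph (e '' s) where
  toEquiv := e
  map_rel_iff' {x y} := by
    simp only [circulantGraph_adj, EquivLike.coe_coe, ← map_sub, e.injective.eq_iff,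
      e.injective.mem_set_image]

theorem circulantGraph_prod_eq_boxProd (s : Set G) (t : Set H) :
    circulantGraph (s ×ˢ {0} ∪ {0} ×ˢ t) = circulantGraph s □ circulantGraph t := by
  ext ⟨x₁, x₂⟩ ⟨y₁, y₂⟩
  simp only [circulantGraph_adj, boxProd_adj, Set.mem_union, Set.mem_prod, Set.mem_singleton_iff,
    Prod.mk_sub_mk, sub_eq_zero, Prod.mk.injEq]
  grind

theorem pathGraph_two_eq_circulantGraph :
    pathGraph 2 = circulantGraph ({1} : Set (ZMod 2)) := by
  rw [pathGraph_two_eq_top]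
  ext x y
  revert x y
  show ∀ x y : ZMod 2, x ≠ y ↔ (circulantGraph {1}).Adj x y
  decide

end SimpleGraph

open SimpleGraph

theorem circGraph_eq_circulantGraph (m : ℕ) (S : Set ℕ) :
    circGraph m S = circulantGraph ((↑) '' S) := by
  ext x y
  simp only [circGraph, fromRel_adj, circulantGraph_adj, Set.mem_image]
  grind

theorem circulant_iso_prism_general (n a : ℕ)
    (haeven : Even a) (hnodd : Odd n) (hg : Nat.gcd a n = 1) :
    Nonempty
      (circGraph (2 * n) {a, n} ≃g
        (SimpleGraph.pathGraph 2).boxProd (circGraph n {1})) := by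
  let c := ZMod.chineseRemainder (Nat.coprime_two_left.2 hnodd)
  let u : (ZMod n)ˣ := ZMod.unitOfCoprime a hg
  let e : ZMod (2 * n) ≃+ ZMod 2 × ZMod n :=
    c.toAddEquiv.trans ((AddEquiv.refl _).prodCongr (DistribMulAction.toAddEquiv _ u⁻¹))
  have he (x : ZMod (2 * n)) : e x = ((c x).1, u⁻¹ • (c x).2) := rfl
  have hea : e a = (0, 1) := by
    simp [he, c, u, map_natCast, ZMod.natCast_eq_zero_iff_even.2 haeven, Units.smul_def]
  have hen : e n = (1, 0) := by
    simp [he, c, map_natCast, ZMod.natCast_eq_one_iff_odd.2 hnodd]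
  have himage : e '' ((↑) '' {a, n}) = {1} ×ˢ {0} ∪ {0} ×ˢ {1} := by
    rw [Set.image_pair, Set.image_pair, hea, hen, Set.singleton_prod_singleton,
      Set.singleton_prod_singleton, Set.singleton_union, Set.pair_comm]
  have hprism : (pathGraph 2).boxProd (circGraph n {1}) =
      circulantGraph ({1} ×ˢ {0} ∪ {0} ×ˢ {1} : Set (ZMod 2 × ZMod n)) := by
    rw [circulantGraph_prod_eq_boxProd, pathGraph_two_eq_circulantGraph,
      circGraph_eq_circulantGraph, Set.image_singleton, Nat.cast_one]
    -- the sides differ only in `Fin 2` versus `ZMod 2`, which agree definitionally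
    rfl
  rw [hprism, ← himage, circGraph_eq_circulantGraph]
  exact ⟨circulantGraphCongr e _⟩

/-- For `a` even, `n` odd and `gcd(a, n) = 1`, the circulant graph `C(2n; {a, n})` is
isomorphic to the prism graph `P₂ □ Cₙ`. -/
theorem circulant_iso_prism (n a : ℕ) (ha0 : 0 < a) (ha : a < n)
    (haeven : Even a) (hnodd : Odd n) (hg : Nat.gcd a n = 1) :
    Nonempty
      (circGraph (2 * n) {a, n} ≃g
        (SimpleGraph.pathGraph 2).boxProd (circGraph n {1})) :=
  circulant_iso_prism_general n a haeven hnodd hg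
end
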